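/- arXiv:2510.24219 — 3 statements merged into one kernel-verified Lean document; each statement's English description precedes it below -/
import Mathlib

section
/- Let f₁ be a characteristic function of a probability measure on ℝ with Im f₁(t) ≠ 0 for all t outside a countable set T ⊂ ℝ. Then there is a countable set D ⊂ (0,1) such that for every δ ∈ (0,1) \ D, the function t ↦ δ + (1-δ) f₁(t) has no zeros on ℝ. -/
open MeasureTheory Set Complex

lemma im_eq_zero_of_ofReal_add_mul_eq_zero {δ : ℝ} {z : ℂ} (hδ : δ ≠ 1)
    (h : (δ : ℂ) + (1 - δ) * z = 0) : z.im = 0 := by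
  have him : (1 - δ) * z.im = 0 := by simpa using congrArg Complex.im h
  exact (mul_eq_zero.1 him).resolve_left (sub_ne_zero.2 hδ.symm)

lemma eq_neg_re_div_of_ofReal_add_mul_eq_zero {δ : ℝ} {z : ℂ}
    (h : (δ : ℂ) + (1 - δ) * z = 0) : δ = -z.re / (1 - z.re) := by
  have hre : δ + (1 - δ) * z.re = 0 := by simpa using congrArg Complex.re h
  have hne : 1 - z.re ≠ 0 := by
    intro h1
    have : z.re = 1 := by linarith
    rw [this] at hre
    linarith
  rw [eq_div_iff hne]
  linarith

theorem stmt2_general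
    (f₁ : ℝ → ℂ)
    (T : Set ℝ) (hT : T.Countable) (him : ∀ t ∉ T, (f₁ t).im ≠ 0) :
    ∃ D ⊆ Set.Ioo (0:ℝ) 1, D.Countable ∧
      ∀ δ ∈ Set.Ioo (0:ℝ) 1, δ ∉ D → ∀ t : ℝ, (δ : ℂ) + (1 - δ) * f₁ t ≠ 0 := by
  refine ⟨(fun t => -(f₁ t).re / (1 - (f₁ t).re)) '' T ∩ Ioo 0 1,
    inter_subset_right, (hT.image _).mono inter_subset_left, ?_⟩
  intro δ hδ hδD t hzero
  have htT : t ∈ T := by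
    by_contra htT
    exact him t htT (im_eq_zero_of_ofReal_add_mul_eq_zero hδ.2.ne hzero)
  exact hδD ⟨⟨t, htT, (eq_neg_re_div_of_ofReal_add_mul_eq_zero hzero).symm⟩, hδ⟩

/-- If `f₁` is the characteristic function of a probability measure on `ℝ`
whose imaginary part vanishes only on a countable set `T`, then there is a countable set
`D ⊆ (0,1)` such that for every `δ ∈ (0,1) \ D` the function `t ↦ δ + (1-δ) f₁ t`
has no real zeros. -/
theorem stmt2 (μ : Measure ℝ) [IsProbabilityMeasure μ]
    (f₁ : ℝ → ℂ) (hf₁ : ∀ t : ℝ, f₁ t = ∫ x, Complex.exp (Complex.I * t * x) ∂μ)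
    (T : Set ℝ) (hT : T.Countable) (him : ∀ t ∉ T, (f₁ t).im ≠ 0) :
    ∃ D ⊆ Set.Ioo (0:ℝ) 1, D.Countable ∧
      ∀ δ ∈ Set.Ioo (0:ℝ) 1, δ ∉ D → ∀ t : ℝ, (δ : ℂ) + (1 - δ) * f₁ t ≠ 0 :=
  stmt2_general f₁ T hT him
end

section
/- Let F₀ be a probability distribution function on ℝ with bounded support, with characteristic function f₀, and let γ₀ ∈ ℝ be such that γ₀ ≠ c(F₀) whenever F₀ is shift-symmetric, where c(F₀) is the center of the support. Then for all δ ∈ (0,1) except a countable set, δ e^{itγ₀} + (1-δ) f₀(t) ≠ 0 for every t ∈ ℝ. In particular, for any τ ∈ (0,1] there exists δ ∈ (0,τ) with this property. -/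
open MeasureTheory Set Complex

/-- The set of points of increase (support) of a distribution on `ℝ`. -/
def suppDF (μ : MeasureTheory.Measure ℝ) : Set ℝ :=
  {x : ℝ | ∀ ε > 0, 0 < μ (Set.Ioo (x - ε) (x + ε))}

/-- The center of the (bounded) support. -/
noncomputable def cextDF (μ : MeasureTheory.Measure ℝ) : ℝ :=
  (sInf (suppDF μ) + sSup (suppDF μ)) / 2

/-- `μ` is shift-symmetric: for some `c`, the shifted distribution function is symmetric. -/
def ShiftSym (μ : MeasureTheory.Measure ℝ) : Prop :=
  ∃ c : ℝ, ∀ x : ℝ, μ (Set.Iic (x + c)) = μ (Set.Ici (c - x))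

/-!
Let `ν = μ.map (· - γ₀)` and `φ = charFun ν`, so that `f₀ t = e^{itγ₀} φ t` and the
equation becomes `δ + (1 - δ) φ t = 0`. For `δ ≠ 1` this forces `Im φ t = 0` and
`δ = Re φ t / (Re φ t - 1)`, so the exceptional `δ` are parametrized by the real zeros of `Im φ`.
As `ν` has bounded support, `φ` is the restriction of the entire function `complexMGF id ν` to
the imaginary axis, so `Im φ` is real analytic. If it vanished identically, `φ` would be real,
hence `ν` symmetric by uniqueness of characteristic functions, i.e. `F₀` symmetric about `γ₀`
with support centred at `γ₀`, which the hypothesis on `γ₀` excludes. So the zeros of `Im φ` are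
isolated, hence countable.
-/

open Filter Topology ProbabilityTheory

theorem AnalyticOnNhd.countable_setOf_eq_zero {𝕜 E : Type*} [NontriviallyNormedField 𝕜]
    [PreconnectedSpace 𝕜] [HereditarilyLindelofSpace 𝕜] [NormedAddCommGroup E] [NormedSpace 𝕜 E]
    {f : 𝕜 → E} (hf : AnalyticOnNhd 𝕜 f univ) (hne : ∃ x, f x ≠ 0) :
    {x | f x = 0}.Countable := by
  refine (HereditarilyLindelofSpace.isLindelof _).countable_of_isDiscrete
    (isDiscrete_iff_nhdsNE.mpr fun x _ => inf_principal_eq_bot.mpr ?_)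
  have hfreq : ¬ ∃ᶠ y in 𝓝[≠] x, f y = 0 := fun h => by
    obtain ⟨y, hy⟩ := hne
    exact hy (hf.eqOn_zero_of_preconnected_of_frequently_eq_zero isPreconnected_univ
      (mem_univ x) h (mem_univ y))
  exact not_frequently.mp hfreq

theorem integrableExpSet_eq_univ_of_ae_abs_le {Ω : Type*} {mΩ : MeasurableSpace Ω}
    {μ : Measure Ω} [IsFiniteMeasure μ] {X : Ω → ℝ} (hX : AEMeasurable X μ) {C : ℝ}
    (hC : ∀ᵐ ω ∂μ, |X ω| ≤ C) : integrableExpSet X μ = univ := by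
  refine eq_univ_of_forall fun s => ?_
  refine Integrable.of_bound (by fun_prop) (Real.exp (|s| * C)) ?_
  filter_upwards [hC] with ω hω
  rw [Real.norm_eq_abs, Real.abs_exp, Real.exp_le_exp]
  calc s * X ω ≤ |s * X ω| := le_abs_self _
    _ = |s| * |X ω| := abs_mul _ _
    _ ≤ |s| * C := mul_le_mul_of_nonneg_left hω (abs_nonneg s)

theorem analyticAt_charFun_of_ae_abs_le {ν : Measure ℝ} [IsFiniteMeasure ν] {C : ℝ}
    (hC : ∀ᵐ x ∂ν, |x| ≤ C) (t : ℝ) : AnalyticAt ℝ (charFun ν) t := by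
  have hent : AnalyticAt ℂ (complexMGF id ν) (t * I) :=
    analyticAt_complexMGF (by simp [integrableExpSet_eq_univ_of_ae_abs_le aemeasurable_id hC])
  have hline : AnalyticAt ℝ (fun s : ℝ => (s : ℂ) * I) t :=
    (ofRealCLM.smulRight I).analyticAt t
  have := hent.restrictScalars.comp_of_eq hline rfl
  simpa [Function.comp_def, complexMGF_id_mul_I] using this

theorem map_neg_eq_self_of_charFun_im_eq_zero {ν : Measure ℝ} [IsFiniteMeasure ν]
    (h : ∀ t, (charFun ν t).im = 0) : ν.map Neg.neg = ν := by
  refine Measure.ext_of_charFun (funext fun t => ?_)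
  have hneg : (Neg.neg : ℝ → ℝ) = ((-1 : ℝ) * ·) := by ext; simp
  rw [hneg, charFun_map_mul, neg_one_mul, charFun_neg, Complex.conj_eq_iff_im.mpr (h t)]

theorem im_eq_zero_and_eq_div_of_add_one_sub_mul_eq_zero {δ : ℝ} (hδ : δ ≠ 1) {w : ℂ}
    (h : (δ : ℂ) + (1 - δ) * w = 0) : w.im = 0 ∧ δ = w.re / (w.re - 1) := by
  have hre := congrArg re h
  have him := congrArg im h
  simp only [add_re, ofReal_re, mul_re, sub_re, one_re, sub_im, one_im, ofReal_im, zero_re,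
    add_im, mul_im, zero_im, sub_self, zero_mul, sub_zero, zero_add, add_zero] at hre him
  have hw : w.im = 0 := by
    have h1 : (1 - δ) ≠ 0 := sub_ne_zero.mpr (Ne.symm hδ)
    have : (1 - δ) * w.im = 0 := by linarith
    exact (mul_eq_zero.mp this).resolve_left h1
  refine ⟨hw, ?_⟩
  have hr : w.re - 1 ≠ 0 := by
    intro h1
    rw [show w.re = 1 by linarith] at hre
    linarith
  rw [eq_div_iff hr]
  linarith

theorem countable_setOf_add_one_sub_mul_charFun_eq_zero {ν : Measure ℝ} [IsFiniteMeasure ν]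
    {C : ℝ} (hC : ∀ᵐ x ∂ν, |x| ≤ C) (hasymm : ν.map Neg.neg ≠ ν) :
    {δ : ℝ | δ ≠ 1 ∧ ∃ t, (δ : ℂ) + (1 - δ) * charFun ν t = 0}.Countable := by
  have hZ : {t | (charFun ν t).im = 0}.Countable := by
    refine AnalyticOnNhd.countable_setOf_eq_zero
      (fun t _ => imCLM.analyticAt _ |>.comp (analyticAt_charFun_of_ae_abs_le hC t)) ?_
    by_contra! h
    exact hasymm (map_neg_eq_self_of_charFun_im_eq_zero h)
  refine (hZ.image fun t => (charFun ν t).re / ((charFun ν t).re - 1)).mono ?_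
  rintro δ ⟨hδ, t, ht⟩
  obtain ⟨him, hre⟩ := im_eq_zero_and_eq_div_of_add_one_sub_mul_eq_zero hδ ht
  exact ⟨t, him, hre.symm⟩

theorem map_add_const_map_sub_const (μ : Measure ℝ) (c : ℝ) :
    (μ.map (· - c)).map (· + c) = μ := by
  rw [Measure.map_map (by fun_prop) (by fun_prop)]
  simp [Function.comp_def]

theorem charFun_eq_cexp_mul_charFun_map_sub_const (μ : Measure ℝ) (c t : ℝ) :
    charFun μ t = cexp (I * t * c) * charFun (μ.map (· - c)) t := by
  nth_rewrite 1 [← map_add_const_map_sub_const μ c]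
  rw [charFun_map_add_const, mul_comm]
  congr 2
  simp only [RCLike.inner_apply, conj_trivial, ofReal_mul]
  ring

theorem ae_abs_le_of_measure_lt_abs_eq_zero {μ : Measure ℝ} {R : ℝ}
    (hR : μ {x | R < |x|} = 0) : ∀ᵐ x ∂μ, |x| ≤ R := by
  simpa using measure_eq_zero_iff_ae_notMem.mp hR

theorem ae_abs_le_map_sub_const {μ : Measure ℝ} {R : ℝ} (hR : ∀ᵐ x ∂μ, |x| ≤ R) (c : ℝ) :
    ∀ᵐ x ∂μ.map (· - c), |x| ≤ R + |c| :=
  (ae_map_iff (by fun_prop) (measurableSet_le (by fun_prop) (by fun_prop))).mpr <|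
    hR.mono fun x hx => (abs_sub x c).trans (by linarith)

section Reflection

variable {μ : Measure ℝ} {c : ℝ}

theorem map_two_mul_sub_eq_self (h : (μ.map (· - c)).map Neg.neg = μ.map (· - c)) :
    μ.map (fun x => 2 * c - x) = μ := by
  calc μ.map (fun x => 2 * c - x) = ((μ.map (· - c)).map Neg.neg).map (· + c) := by
        rw [Measure.map_map (by fun_prop) (by fun_prop),
          Measure.map_map (by fun_prop) (by fun_prop)]
        congr 1; ext x; simp only [Function.comp_apply]; ring
    _ = μ := by rw [h, map_add_const_map_sub_const]

theorem shiftSym_of_map_two_mul_sub_eq_self (h : μ.map (fun x => 2 * c - x) = μ) :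
    ShiftSym μ := by
  refine ⟨c, fun x => ?_⟩
  nth_rewrite 1 [← h]
  rw [Measure.map_apply (by fun_prop) measurableSet_Iic]
  congr 1; ext y; simp only [mem_preimage, mem_Iic, mem_Ici]; constructor <;> intro <;> linarith

theorem two_mul_sub_mem_support (h : μ.map (fun x => 2 * c - x) = μ) {x : ℝ}
    (hx : x ∈ μ.support) : 2 * c - x ∈ μ.support := by
  rw [Measure.mem_support_iff_forall] at hx ⊢
  intro U hU
  have hpre : (fun y => 2 * c - y) ⁻¹' U ∈ 𝓝 x :=
    (continuous_const.sub continuous_id).continuousAt.preimage_mem_nhds hU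
  calc 0 < μ ((fun y => 2 * c - y) ⁻¹' U) := hx _ hpre
    _ ≤ μ.map (fun y => 2 * c - y) U := Measure.le_map_apply (by fun_prop) U
    _ = μ U := by rw [h]

end Reflection

theorem sInf_add_sSup_eq_of_two_mul_sub_mem {S : Set ℝ} (hne : S.Nonempty)
    (hbdd : Bornology.IsBounded S) {c : ℝ} (hS : ∀ x ∈ S, 2 * c - x ∈ S) :
    sInf S + sSup S = 2 * c := by
  have hub : sSup S ≤ 2 * c - sInf S :=
    csSup_le hne fun x hx => by linarith [csInf_le hbdd.bddBelow (hS x hx)]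
  have hlb : 2 * c - sSup S ≤ sInf S :=
    le_csInf hne fun x hx => by linarith [le_csSup hbdd.bddAbove (hS x hx)]
  linarith

theorem suppDF_eq_support (μ : Measure ℝ) : suppDF μ = μ.support := by
  ext x
  exact (nhds_basis_Ioo_pos x).mem_measureSupport.symm

theorem cextDF_eq_of_map_two_mul_sub_eq_self {μ : Measure ℝ} [NeZero μ] {R c : ℝ}
    (hR : ∀ᵐ x ∂μ, |x| ≤ R) (h : μ.map (fun x => 2 * c - x) = μ) : cextDF μ = c := by
  have hbdd : Bornology.IsBounded μ.support :=
    (Metric.isBounded_Icc (-R) R).subset <| Measure.support_subset_of_isClosed isClosed_Icc <|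
      hR.mono fun x hx => abs_le.mp hx
  have := sInf_add_sSup_eq_of_two_mul_sub_mem (Measure.nonempty_support (NeZero.ne μ)) hbdd
    fun x hx => two_mul_sub_mem_support h hx
  rw [cextDF, suppDF_eq_support, this]
  ring

/-- key lemma: Let `F₀` be a probability distribution on `ℝ` with bounded
support, characteristic function `f₀`, and `γ₀ ∈ ℝ` with `γ₀ ≠ c(F₀)` whenever `F₀` is
shift-symmetric. Then outside a countable set of `δ ∈ (0,1)` we have
`δ e^{itγ₀} + (1-δ) f₀ t ≠ 0` for all `t`; in particular for every `τ ∈ (0,1]` some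
`δ ∈ (0,τ)` has this property. -/
theorem stmt3 (μ : MeasureTheory.Measure ℝ) [IsProbabilityMeasure μ]
    (hbdd : ∃ R : ℝ, μ {x : ℝ | R < |x|} = 0)
    (f₀ : ℝ → ℂ) (hf₀ : ∀ t : ℝ, f₀ t = ∫ x, Complex.exp (Complex.I * t * x) ∂μ)
    (γ₀ : ℝ) (hγ₀ : ShiftSym μ → γ₀ ≠ cextDF μ) :
    (∃ D : Set ℝ, D.Countable ∧ ∀ δ ∈ Set.Ioo (0:ℝ) 1, δ ∉ D →
        ∀ t : ℝ, (δ : ℂ) * Complex.exp (Complex.I * t * γ₀) + (1 - δ) * f₀ t ≠ 0) ∧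
    ∀ τ ∈ Set.Ioc (0:ℝ) 1, ∃ δ ∈ Set.Ioo (0:ℝ) τ,
        ∀ t : ℝ, (δ : ℂ) * Complex.exp (Complex.I * t * γ₀) + (1 - δ) * f₀ t ≠ 0 := by
  obtain ⟨R, hR⟩ := hbdd
  have hμR := ae_abs_le_of_measure_lt_abs_eq_zero hR
  set ν := μ.map (· - γ₀)
  have hasymm : ν.map Neg.neg ≠ ν := fun h =>
    have hrefl := map_two_mul_sub_eq_self h
    hγ₀ (shiftSym_of_map_two_mul_sub_eq_self hrefl)
      (cextDF_eq_of_map_two_mul_sub_eq_self hμR hrefl).symm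
  set D := {δ : ℝ | δ ≠ 1 ∧ ∃ t, (δ : ℂ) + (1 - δ) * charFun ν t = 0}
  have hD : D.Countable :=
    countable_setOf_add_one_sub_mul_charFun_eq_zero (ae_abs_le_map_sub_const hμR γ₀) hasymm
  have hmain : ∀ δ ∈ Ioo (0 : ℝ) 1, δ ∉ D →
      ∀ t : ℝ, (δ : ℂ) * cexp (I * t * γ₀) + (1 - δ) * f₀ t ≠ 0 := by
    intro δ hδ hδD t h
    have hf₀t : f₀ t = cexp (I * t * γ₀) * charFun ν t := by
      rw [hf₀, ← charFun_eq_cexp_mul_charFun_map_sub_const, charFun_apply_real]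
      congr 1 with x
      ring_nf
    refine hδD ⟨hδ.2.ne, t, (mul_eq_zero.mp ?_).resolve_left (exp_ne_zero (I * t * γ₀))⟩
    rw [hf₀t] at h
    linear_combination h
  refine ⟨⟨D, hD, hmain⟩, fun τ hτ => ?_⟩
  obtain ⟨δ, hδ, hδD⟩ := not_subset.mp fun hsub =>
    (Cardinal.Real.Ioo_countable_iff.mp (hD.mono hsub)).not_gt hτ.1
  exact ⟨δ, hδ, hmain δ ⟨hδ.1, hδ.2.trans_le hτ.2⟩ hδD⟩
end

section
/- Let β₁, …, β_m be real numbers linearly independent over ℚ, and let g : ℝ^m → ℂ be continuous and periodic in the j-th variable with period 2π/β_j for each j. Then the closure of the range of the diagonal restriction t ↦ g(t, t, …, t), t ∈ ℝ, equals the closure of the range of g on ℝ^m. In particular, if |g(t,…,t)| ≥ μ > 0 for all t ∈ ℝ, then |g(t₁,…,t_m)| ≥ μ for all (t₁,…,t_m) ∈ ℝ^m. -/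
open Complex Real

/-!
Bohr's proof of Kronecker's theorem. Suppose that for some `x` the coordinates of
`(t β_j - x_j)_j` are never all within `δ` of `0` modulo `2π`. Then
`F t = ∏ j, (1 + exp (i (t β_j - x_j)))` satisfies `‖F t‖² ≤ A` for some `A < 4^m`. By
`ℚ`-independence the frequencies `∑ k_j β_j` in the expansion of `F^(2n)` are distinct, so each
coefficient is a long-time mean of `F^(2n)` times a character and is bounded by `A^n`; but the
central coefficient has modulus `centralBinom n ^ m ≥ (4^n / 2n)^m`, which eventually exceeds it.
Hence the points `(t + n_j 2π/β_j)_j` are dense in `ℝ^m`, and by continuity and periodicity every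
value of `g` is a limit of values of `g` on the diagonal.
-/

theorem norm_integral_exp_mul_I_le {d : ℝ} (hd : d ≠ 0) (T : ℝ) :
    ‖∫ t in (0 : ℝ)..T, cexp (↑(d * t) * I)‖ ≤ 2 / |d| := by
  have hdI : (d : ℂ) * I ≠ 0 := mul_ne_zero (ofReal_ne_zero.2 hd) I_ne_zero
  have h := integral_exp_mul_complex (a := 0) (b := T) hdI
  simp only [ofReal_mul, mul_right_comm _ _ I] at h ⊢
  rw [h, norm_div, norm_mul, norm_I, mul_one, norm_real, Real.norm_eq_abs]
  gcongr
  calc ‖cexp (↑d * I * ↑T) - cexp (↑d * I * ↑(0:ℝ))‖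
      ≤ ‖cexp (↑d * I * ↑T)‖ + ‖cexp (↑d * I * ↑(0:ℝ))‖ := norm_sub_le _ _
    _ = 2 := by
      simp only [mul_right_comm _ I, ← ofReal_mul, norm_exp_ofReal_mul_I]; norm_num

theorem norm_one_add_exp_mul_I_sq (θ : ℝ) : ‖1 + cexp (θ * I)‖ ^ 2 = 2 + 2 * Real.cos θ := by
  rw [Complex.sq_norm, Complex.normSq_apply]
  simp only [add_re, add_im, one_re, one_im, exp_ofReal_mul_I_re, exp_ofReal_mul_I_im]
  nlinarith [Real.sin_sq_add_cos_sq θ]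

theorem exists_pow_lt_centralBinom_pow (m : ℕ) {A : ℝ} (hA : A < 4 ^ m) :
    ∃ n : ℕ, A ^ n < (n.centralBinom : ℝ) ^ m := by
  rcases le_or_gt A 0 with hA0 | hA0
  · refine ⟨1, (pow_one A).trans_lt (hA0.trans_lt (lt_of_lt_of_le one_pos (one_le_pow₀ ?_)))⟩
    exact_mod_cast Nat.centralBinom_pos 1
  have hr : 1 < 4 ^ m / A := (one_lt_div hA0).2 hA
  obtain ⟨n, hn, hn1⟩ := ((tendsto_pow_const_div_const_pow_of_one_lt m hr).eventually_lt_const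
    (by positivity : (0 : ℝ) < 1 / 2 ^ m) |>.and (Filter.eventually_ge_atTop 1)).exists
  rw [div_lt_iff₀ (by positivity), div_pow, ← mul_div_assoc, lt_div_iff₀ (by positivity)] at hn
  have hcb : (4 : ℝ) ^ n ≤ 2 * n * n.centralBinom := by
    exact_mod_cast Nat.four_pow_le_two_mul_self_mul_centralBinom n hn1
  refine ⟨n, lt_of_mul_lt_mul_left ?_ (by positivity : (0 : ℝ) ≤ (2 * n) ^ m)⟩
  calc (2 * n : ℝ) ^ m * A ^ n = 2 ^ m * (n ^ m * A ^ n) := by ring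
    _ < 2 ^ m * (1 / 2 ^ m * (4 ^ m) ^ n) := by gcongr
    _ = (4 ^ n) ^ m := by rw [← pow_mul, ← pow_mul, mul_comm n m]; field_simp
    _ ≤ (2 * n * n.centralBinom) ^ m := pow_le_pow_left₀ (by positivity) hcb m
    _ = (2 * n : ℝ) ^ m * (n.centralBinom : ℝ) ^ m := mul_pow _ _ _

theorem exists_int_abs_sub_lt_of_cos_lt {θ δ : ℝ} (hδ₀ : 0 ≤ δ) (hδ : δ ≤ π)
    (h : Real.cos δ < Real.cos θ) : ∃ n : ℤ, |θ - 2 * π * n| < δ := by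
  refine ⟨round (θ / (2 * π)), ?_⟩
  set θ' := θ - 2 * π * round (θ / (2 * π))
  have hθ' : |θ'| ≤ π := by
    have hround := abs_sub_round (θ / (2 * π))
    have : θ' = (θ / (2 * π) - round (θ / (2 * π))) * (2 * π) := by
      simp only [θ']; field_simp
    rw [this, abs_mul, abs_of_pos (by positivity : (0 : ℝ) < 2 * π)]
    nlinarith [Real.pi_pos]
  have hcos : Real.cos |θ'| = Real.cos θ := by
    rw [Real.cos_abs, show θ' = θ - (round (θ / (2 * π)) : ℤ) * (2 * π) by ring,
      Real.cos_sub_int_mul_two_pi]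
  rw [← hcos] at h
  exact (StrictAntiOn.lt_iff_gt Real.strictAntiOn_cos ⟨hδ₀, hδ⟩ ⟨abs_nonneg _, hθ'⟩).1 h

section TrigonometricPolynomial

variable {ι : Type*} {s : Finset ι} {c : ι → ℝ} {b : ι → ℂ} {B : ℝ} {k₀ : ι}

theorem norm_le_of_forall_norm_sum_exp_le_of_eq_zero [DecidableEq ι] (hk₀ : k₀ ∈ s)
    (hc₀ : c k₀ = 0) (hc : ∀ k ∈ s, k ≠ k₀ → c k ≠ 0)
    (h : ∀ t : ℝ, ‖∑ k ∈ s, b k * cexp (↑(c k * t) * I)‖ ≤ B) : ‖b k₀‖ ≤ B := by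
  set C := ∑ k ∈ s.erase k₀, ‖b k‖ * (2 / |c k|)
  have hint (T : ℝ) : ∫ t in (0 : ℝ)..T, ∑ k ∈ s, b k * cexp (↑(c k * t) * I) =
      T * b k₀ + ∑ k ∈ s.erase k₀, b k * ∫ t in (0 : ℝ)..T, cexp (↑(c k * t) * I) := by
    rw [intervalIntegral.integral_finsetSum fun k _ =>
      (by fun_prop : Continuous _).intervalIntegrable _ _, ← Finset.add_sum_erase _ _ hk₀]
    simp [hc₀, intervalIntegral.integral_const_mul, mul_comm]
  have hmean (T : ℝ) (hT : 0 < T) : T * ‖b k₀‖ ≤ B * T + C := by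
    have hle := intervalIntegral.norm_integral_le_of_norm_le_const (a := 0) (b := T)
      fun t _ => h t
    rw [hint, sub_zero, abs_of_pos hT] at hle
    set tail := ∑ k ∈ s.erase k₀, b k * ∫ t in (0 : ℝ)..T, cexp (↑(c k * t) * I)
    have htail : ‖tail‖ ≤ C := by
      refine (norm_sum_le _ _).trans (Finset.sum_le_sum fun k hk => ?_)
      rw [norm_mul]
      gcongr
      exact norm_integral_exp_mul_I_le
        (hc k (Finset.mem_of_mem_erase hk) (Finset.ne_of_mem_erase hk)) T
    calc T * ‖b k₀‖ = ‖(T : ℂ) * b k₀‖ := by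
          rw [norm_mul, norm_real, Real.norm_eq_abs, abs_of_pos hT]
      _ ≤ ‖(T : ℂ) * b k₀ + tail‖ + ‖tail‖ := norm_le_add_norm_add _ _
      _ ≤ B * T + C := add_le_add hle htail
  by_contra! hB
  have hgap : 0 < ‖b k₀‖ - B := sub_pos.2 hB
  have hC : 0 ≤ C := Finset.sum_nonneg fun k _ => by positivity
  have := hmean ((C + 1) / (‖b k₀‖ - B)) (by positivity)
  have hT : (C + 1) / (‖b k₀‖ - B) * (‖b k₀‖ - B) = C + 1 := div_mul_cancel₀ _ hgap.ne'
  nlinarith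

theorem norm_le_of_forall_norm_sum_exp_le (hk₀ : k₀ ∈ s) (hc : Set.InjOn c s)
    (h : ∀ t : ℝ, ‖∑ k ∈ s, b k * cexp (↑(c k * t) * I)‖ ≤ B) : ‖b k₀‖ ≤ B := by
  classical
  refine norm_le_of_forall_norm_sum_exp_le_of_eq_zero (c := fun k => c k - c k₀) hk₀ (sub_self _)
    (fun k hk hne => sub_ne_zero.2 fun hck => hne (hc hk hk₀ hck)) fun t => ?_
  have hshift : ∑ k ∈ s, b k * cexp (↑((c k - c k₀) * t) * I) =
      (∑ k ∈ s, b k * cexp (↑(c k * t) * I)) * cexp (↑(-(c k₀ * t)) * I) := by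
    rw [Finset.sum_mul]
    refine Finset.sum_congr rfl fun k _ => ?_
    rw [mul_assoc, ← Complex.exp_add]
    push_cast
    ring_nf
  rw [hshift, norm_mul, norm_exp_ofReal_mul_I, mul_one]
  exact h t

end TrigonometricPolynomial

section Kronecker

variable {ι : Type*} [Fintype ι] {β : ι → ℝ}

theorem prod_one_add_exp_pow_eq_sum [DecidableEq ι] (p : ℕ) (θ : ι → ℝ) :
    (∏ j, (1 + cexp (θ j * I))) ^ p = ∑ k ∈ Fintype.piFinset fun _ => Finset.range (p + 1),
      (∏ j, (p.choose (k j) : ℂ)) * cexp (↑(∑ j, k j * θ j) * I) := by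
  have hbinom (j : ι) : (1 + cexp (θ j * I)) ^ p =
      ∑ k ∈ Finset.range (p + 1), (p.choose k : ℂ) * cexp (θ j * I) ^ k := by
    rw [add_comm, add_pow]
    exact Finset.sum_congr rfl fun k _ => by rw [one_pow, mul_one, mul_comm]
  rw [← Finset.prod_pow, Finset.prod_congr rfl fun j _ => hbinom j, Finset.prod_univ_sum]
  refine Finset.sum_congr rfl fun k _ => ?_
  rw [Finset.prod_mul_distrib, ofReal_sum, Finset.sum_mul, Complex.exp_sum]
  congr 1
  refine Finset.prod_congr rfl fun j _ => ?_
  rw [← Complex.exp_nat_mul]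
  push_cast
  ring_nf

theorem injective_sum_nat_mul (hβ : LinearIndependent ℚ β) :
    Function.Injective fun k : ι → ℕ => ∑ j, (k j : ℝ) * β j := by
  intro k k' h
  funext j
  exact Fintype.linearIndependent_iffₛ.1 (hβ.restrict_scalars' ℕ) k k'
    (by simpa only [nsmul_eq_mul] using h) j

theorem centralBinom_pow_le (hβ : LinearIndependent ℚ β) (x : ι → ℝ) {A : ℝ}
    (hA : ∀ t : ℝ, ‖∏ j, (1 + cexp (↑(t * β j - x j) * I))‖ ^ 2 ≤ A) (n : ℕ) :
    (n.centralBinom : ℝ) ^ Fintype.card ι ≤ A ^ n := by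
  classical
  set b : (ι → ℕ) → ℂ := fun k =>
    (∏ j, ((2 * n).choose (k j) : ℂ)) * cexp (↑(-∑ j, k j * x j) * I)
  have hsum (t : ℝ) : ∑ k ∈ Fintype.piFinset fun _ => Finset.range (2 * n + 1),
      b k * cexp (↑((∑ j, (k j : ℝ) * β j) * t) * I) =
      (∏ j, (1 + cexp (↑(t * β j - x j) * I))) ^ (2 * n) := by
    rw [prod_one_add_exp_pow_eq_sum]
    refine Finset.sum_congr rfl fun k _ => ?_
    rw [mul_assoc, ← Complex.exp_add]
    push_cast
    congr 2
    simp only [Finset.sum_mul, ← Finset.sum_neg_distrib, ← Finset.sum_add_distrib, mul_sub]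
    exact Finset.sum_congr rfl fun j _ => by ring
  have hmem : (fun _ => n) ∈ Fintype.piFinset fun _ : ι => Finset.range (2 * n + 1) := by
    simp only [Fintype.mem_piFinset, Finset.mem_range]
    omega
  have hcoeff := norm_le_of_forall_norm_sum_exp_le hmem (injective_sum_nat_mul hβ).injOn
    fun t => by
      rw [hsum, norm_pow, pow_mul]
      exact pow_le_pow_left₀ (by positivity) (hA t) n
  simpa only [b, norm_mul, norm_exp_ofReal_mul_I, mul_one, norm_prod, norm_pow,
    Complex.norm_natCast, Finset.prod_const, Finset.card_univ,
    Nat.centralBinom_eq_two_mul_choose] using hcoeff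

theorem exists_forall_lt_cos (hβ : LinearIndependent ℚ β) (x : ι → ℝ) {c : ℝ}
    (hc : c < 1) : ∃ t : ℝ, ∀ j, c < Real.cos (t * β j - x j) := by
  classical
  by_contra! hfar
  obtain ⟨j₀, -⟩ := hfar 0
  set m := Fintype.card ι
  have hbound (t : ℝ) :
      ‖∏ j, (1 + cexp (↑(t * β j - x j) * I))‖ ^ 2 ≤ (2 + 2 * c) * 4 ^ (m - 1) := by
    obtain ⟨j, hj⟩ := hfar t
    have hfactor (j : ι) : 0 ≤ 2 + 2 * Real.cos (t * β j - x j) := by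
      nlinarith [Real.neg_one_le_cos (t * β j - x j)]
    rw [norm_prod, ← Finset.prod_pow, ← Finset.mul_prod_erase _ _ (Finset.mem_univ j)]
    simp only [norm_one_add_exp_mul_I_sq]
    refine mul_le_mul (by linarith) ?_ (Finset.prod_nonneg fun j _ => hfactor j)
      ((hfactor j).trans (by linarith))
    calc ∏ j ∈ Finset.univ.erase j, (2 + 2 * Real.cos (t * β j - x j))
        ≤ ∏ _j ∈ Finset.univ.erase j, (4 : ℝ) :=
          Finset.prod_le_prod (fun j _ => hfactor j) fun j _ => by
            linarith [Real.cos_le_one (t * β j - x j)]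
      _ = 4 ^ (m - 1) := by
          rw [Finset.prod_const, Finset.card_erase_of_mem (Finset.mem_univ j), Finset.card_univ]
  have hlt : (2 + 2 * c) * 4 ^ (m - 1) < 4 ^ m := by
    calc (2 + 2 * c) * 4 ^ (m - 1) < 4 * 4 ^ (m - 1) :=
          mul_lt_mul_of_pos_right (by linarith) (by positivity)
      _ = 4 ^ m := by rw [← pow_succ', Nat.sub_add_cancel (Fintype.card_pos_iff.2 ⟨j₀⟩)]
  obtain ⟨n, hn⟩ := exists_pow_lt_centralBinom_pow m hlt
  exact (centralBinom_pow_le hβ x hbound n).not_gt hn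

theorem denseRange_mul_add_two_pi_mul (hβ : LinearIndependent ℚ β) :
    DenseRange fun p : ℝ × (ι → ℤ) => fun j => p.1 * β j + 2 * π * p.2 j := by
  refine Metric.denseRange_iff.2 fun x r hr => ?_
  set δ := min r π
  have hδ : 0 < δ := lt_min hr Real.pi_pos
  have hcosδ : Real.cos δ < 1 := by
    simpa using StrictAntiOn.lt_iff_gt Real.strictAntiOn_cos ⟨hδ.le, min_le_right r π⟩
      ⟨le_rfl, Real.pi_pos.le⟩ |>.2 hδ
  obtain ⟨t, ht⟩ := exists_forall_lt_cos hβ x hcosδ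
  choose n hn using fun j => exists_int_abs_sub_lt_of_cos_lt hδ.le (min_le_right r π) (ht j)
  refine ⟨(t, -n), (dist_pi_lt_iff hr).2 fun j => ?_⟩
  rw [Real.dist_eq, abs_sub_comm]
  refine (congrArg abs ?_).trans_lt ((hn j).trans_le (min_le_left r π))
  simp only [Pi.neg_apply, Int.cast_neg]
  ring

theorem denseRange_add_int_mul_div (hβ : LinearIndependent ℚ β) :
    DenseRange fun p : ℝ × (ι → ℤ) => fun j => p.1 + p.2 j * (2 * π / β j) := by
  have hsurj : Function.Surjective fun θ : ι → ℝ => fun j => θ j / β j :=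
    fun u => ⟨fun j => u j * β j, funext fun j => mul_div_cancel_right₀ _ (hβ.ne_zero j)⟩
  convert hsurj.denseRange.comp (denseRange_mul_add_two_pi_mul hβ) (by fun_prop) using 1
  funext p j
  simp only [Function.comp_apply]
  field_simp [hβ.ne_zero j]

theorem map_add_int_mul_period {α : Type*} [DecidableEq ι] {g : (ι → ℝ) → α} {P : ι → ℝ}
    (hper : ∀ j t, g (Function.update t j (t j + P j)) = g t) (t : ι → ℝ) (n : ι → ℤ) :
    g (t + fun j => n j * P j) = g t := by
  have hsingle (j : ι) : Function.Periodic g (Pi.single j (P j)) := fun t => by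
    rw [← hper j t]
    congr 1
    funext i
    by_cases hij : i = j <;> simp [Function.update, hij]
  have hsum : Function.Periodic g (∑ j, Pi.single j (n j • P j)) :=
    Finset.sum_induction _ (Function.Periodic g) (fun _ _ => Function.Periodic.add_period)
      (fun t => by rw [add_zero]) fun j _ => by
        rw [Pi.single_smul]
        exact (hsingle j).zsmul (n j)
  rw [Finset.univ_sum_single] at hsum
  simpa only [zsmul_eq_mul] using hsum t

end Kronecker

theorem stmt18_general (m : ℕ) (β : Fin m → ℝ)
    (hind : ∀ r : Fin m → ℚ, (∑ j, (r j : ℝ) * β j) = 0 → ∀ j, r j = 0)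
    (g : (Fin m → ℝ) → ℂ) (hg : Continuous g)
    (hper : ∀ (j : Fin m) (t : Fin m → ℝ),
      g (Function.update t j (t j + 2 * Real.pi / β j)) = g t) :
    closure (Set.range (fun t : ℝ => g (fun _ => t))) = closure (Set.range g) ∧
    ∀ μ : ℝ, 0 < μ → (∀ t : ℝ, μ ≤ ‖g (fun _ => t)‖) →
      ∀ t : Fin m → ℝ, μ ≤ ‖g t‖ := by
  have hβ : LinearIndependent ℚ β :=
    Fintype.linearIndependent_iff.2 fun r hr => hind r (by simpa only [Rat.smul_def] using hr)
  have hdense : Set.range g ⊆ closure (Set.range fun t : ℝ => g fun _ => t) := by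
    refine (hg.range_subset_closure_image_dense (denseRange_add_int_mul_div hβ)).trans
      (closure_mono ?_)
    rintro _ ⟨_, ⟨⟨t, n⟩, rfl⟩, rfl⟩
    exact ⟨t, (map_add_int_mul_period hper (fun _ => t) n).symm⟩
  refine ⟨(closure_mono (Set.range_subset_iff.2 fun t => Set.mem_range_self _)).antisymm
    (closure_minimal hdense isClosed_closure), fun μ _ hμ t => ?_⟩
  exact closure_minimal (t := {z : ℂ | μ ≤ ‖z‖}) (Set.range_subset_iff.2 hμ)
    (isClosed_le continuous_const continuous_norm) (hdense (Set.mem_range_self t))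

/-- Let `β₁, …, β_m` be nonzero reals linearly independent over `ℚ` and let
`g : ℝ^m → ℂ` be continuous and `2π/β_j`-periodic in the `j`-th variable.  Then the closure
of the range of the diagonal restriction `t ↦ g(t,…,t)` equals the closure of the range of
`g`; in particular if `|g(t,…,t)| ≥ μ > 0` for all real `t`, then `|g| ≥ μ` everywhere. -/
theorem stmt18 (m : ℕ) (β : Fin m → ℝ) (hβ0 : ∀ j, β j ≠ 0)
    (hind : ∀ r : Fin m → ℚ, (∑ j, (r j : ℝ) * β j) = 0 → ∀ j, r j = 0)
    (g : (Fin m → ℝ) → ℂ) (hg : Continuous g)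
    (hper : ∀ (j : Fin m) (t : Fin m → ℝ),
      g (Function.update t j (t j + 2 * Real.pi / β j)) = g t) :
    closure (Set.range (fun t : ℝ => g (fun _ => t))) = closure (Set.range g) ∧
    ∀ μ : ℝ, 0 < μ → (∀ t : ℝ, μ ≤ ‖g (fun _ => t)‖) →
      ∀ t : Fin m → ℝ, μ ≤ ‖g t‖ :=
  stmt18_general m β hind g hg hper
end
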